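/- Let X, X' be ρ-indistinguishable random variables over X and E an event with P(X ∈ E) ≥ q and P(X' ∈ E) ≥ q for some q > 0. Then X|_E and X'|_E are (ρ/q)-indistinguishable. -/

import Mathlib

/-!
Write `S_A = ∑_{x ∈ A} P x ^ α / Q x ^ (α - 1)`, `p = P(E)`, `r = Q(E)` and `T` for the Rényi sum
of the conditioned pair, so that `S_E = p ^ α / r ^ (α - 1) * T`. Radon's inequality (weighted
Hölder) applied on `Eᶜ` and then to the two blocks `E`, `Eᶜ` gives
`S_E + S_{Eᶜ} ≥ (p T^{1/α} + (1 - p)) ^ α`, and weighted AM-GM bounds this below by `T ^ p`.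
Taking logarithms, `D_α(P|_E ‖ Q|_E) ≤ D_α(P ‖ Q) / p ≤ ρα / q`.
-/

open Finset

/-- Rényi divergence of order `α` between two discrete distributions on a finite type. -/
noncomputable def renyiDiv {X : Type*} [Fintype X] (α : ℝ) (P Q : X → ℝ) : ℝ :=
  (α - 1)⁻¹ * Real.log (∑ x, (P x) ^ α / (Q x) ^ (α - 1))

/-- Conditioning a discrete distribution on an event. -/
noncomputable def condOn {X : Type*} [Fintype X] [DecidableEq X]
    (P : X → ℝ) (E : Finset X) : X → ℝ :=
  fun x => if x ∈ E then P x / ∑ y ∈ E, P y else 0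

/-- `ρ`-indistinguishability: all Rényi divergences of order `α` (both directions)
are at most `ρα`. -/
def Indist {X : Type*} [Fintype X] (ρ : ℝ) (P Q : X → ℝ) : Prop :=
  ∀ α : ℝ, 1 < α → renyiDiv α P Q ≤ ρ * α ∧ renyiDiv α Q P ≤ ρ * α

open Real

/-- Radon's inequality: the weighted Hölder inequality with weights `v` applied to `u / v`. -/
theorem rpow_sum_div_rpow_sum_le {ι : Type*} (s : Finset ι) {α : ℝ} (hα : 1 ≤ α)
    {u v : ι → ℝ} (hu : ∀ i, 0 ≤ u i) (hv : ∀ i, 0 ≤ v i)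
    (huv : ∀ i ∈ s, v i = 0 → u i = 0) :
    (∑ i ∈ s, u i) ^ α / (∑ i ∈ s, v i) ^ (α - 1) ≤ ∑ i ∈ s, u i ^ α / v i ^ (α - 1) := by
  have hα0 : 0 < α := by linarith
  have hvu : ∀ i ∈ s, v i * (u i / v i) = u i := fun i hi => by
    rcases eq_or_ne (v i) 0 with h | h
    · simp [h, huv i hi h]
    · exact mul_div_cancel₀ _ h
  have hvu_rpow : ∀ i ∈ s, v i * (u i / v i) ^ α = u i ^ α / v i ^ (α - 1) := fun i hi => by
    rcases (hv i).eq_or_lt with h | h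
    · simp [← h, huv i hi h.symm, zero_rpow hα0.ne']
    · rw [div_rpow (hu i) h.le, rpow_sub_one h.ne']
      field_simp
  have holder := inner_le_weight_mul_Lp_of_nonneg s hα v (fun i => u i / v i) hv
    (fun i => div_nonneg (hu i) (hv i))
  rw [sum_congr rfl hvu, sum_congr rfl hvu_rpow] at holder
  have hV : 0 ≤ ∑ i ∈ s, v i := sum_nonneg fun i _ => hv i
  have hR : 0 ≤ ∑ i ∈ s, u i ^ α / v i ^ (α - 1) :=
    sum_nonneg fun i _ => div_nonneg (rpow_nonneg (hu i) _) (rpow_nonneg (hv i) _)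
  refine div_le_of_le_mul₀ (rpow_nonneg hV _) hR ?_
  calc (∑ i ∈ s, u i) ^ α
      ≤ ((∑ i ∈ s, v i) ^ (1 - α⁻¹) * (∑ i ∈ s, u i ^ α / v i ^ (α - 1)) ^ α⁻¹) ^ α :=
        rpow_le_rpow (sum_nonneg fun i _ => hu i) holder hα0.le
    _ = (∑ i ∈ s, u i ^ α / v i ^ (α - 1)) * (∑ i ∈ s, v i) ^ (α - 1) := by
        rw [mul_rpow (rpow_nonneg hV _) (rpow_nonneg hR _), rpow_inv_rpow hR hα0.ne',
          ← rpow_mul hV, sub_mul, inv_mul_cancel₀ hα0.ne', one_mul, mul_comm]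

theorem rpow_add_div_rpow_add_le {a b c d α : ℝ} (hα : 1 ≤ α) (ha : 0 ≤ a) (hb : 0 ≤ b)
    (hc : 0 ≤ c) (hd : 0 ≤ d) (hca : c = 0 → a = 0) (hdb : d = 0 → b = 0) :
    (a + b) ^ α / (c + d) ^ (α - 1) ≤ a ^ α / c ^ (α - 1) + b ^ α / d ^ (α - 1) := by
  simpa using rpow_sum_div_rpow_sum_le univ hα (u := ![a, b]) (v := ![c, d])
    (Fin.forall_fin_two.2 ⟨ha, hb⟩) (Fin.forall_fin_two.2 ⟨hc, hd⟩)
    (by simpa [Fin.forall_fin_two] using ⟨hca, hdb⟩)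

theorem rpow_le_mul_rpow_inv_add_one_sub_rpow {t p α : ℝ} (ht : 0 ≤ t) (hp₀ : 0 ≤ p)
    (hp₁ : p ≤ 1) (hα : 0 < α) :
    t ^ p ≤ (p * t ^ α⁻¹ + (1 - p)) ^ α := by
  have amgm := geom_mean_le_arith_mean2_weighted hp₀ (sub_nonneg.2 hp₁)
    (rpow_nonneg ht α⁻¹) zero_le_one (add_sub_cancel p 1)
  rw [one_rpow, mul_one, mul_one] at amgm
  calc t ^ p = ((t ^ α⁻¹) ^ p) ^ α := by
        rw [← rpow_mul ht, ← rpow_mul ht, mul_comm α⁻¹, mul_assoc, inv_mul_cancel₀ hα.ne',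
          mul_one]
    _ ≤ (p * t ^ α⁻¹ + (1 - p)) ^ α := rpow_le_rpow (by positivity) amgm hα.le

theorem log_le_log_div_of_rpow_le {t s p : ℝ} (ht : 0 ≤ t) (hs : 1 ≤ s) (hp : 0 < p)
    (h : t ^ p ≤ s) : log t ≤ log s / p := by
  rw [le_div_iff₀ hp]
  rcases ht.eq_or_lt with rfl | ht
  · simpa using log_nonneg hs
  · rw [mul_comm, ← log_rpow ht]
    exact log_le_log (rpow_pos_of_pos ht p) h

theorem sum_eq_zero_of_sum_eq_zero_of_absCont {ι : Type*} {P Q : ι → ℝ} (s : Finset ι)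
    (hQ : ∀ i, 0 ≤ Q i) (hac : ∀ i, Q i = 0 → P i = 0) (h : ∑ i ∈ s, Q i = 0) :
    ∑ i ∈ s, P i = 0 :=
  sum_eq_zero fun i hi => hac i ((sum_eq_zero_iff_of_nonneg fun j _ => hQ j).1 h i hi)

section Distributions

variable {X : Type*} [Fintype X] {P Q : X → ℝ} {α : ℝ}

theorem one_le_sum_rpow_div (hα : 1 ≤ α) (hP : ∀ x, 0 ≤ P x) (hQ : ∀ x, 0 ≤ Q x)
    (hP1 : ∑ x, P x = 1) (hQ1 : ∑ x, Q x = 1) (hac : ∀ x, Q x = 0 → P x = 0) :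
    1 ≤ ∑ x, P x ^ α / Q x ^ (α - 1) := by
  simpa [hP1, hQ1] using rpow_sum_div_rpow_sum_le univ hα hP hQ fun x _ => hac x

theorem renyiDiv_nonneg (hα : 1 ≤ α) (hP : ∀ x, 0 ≤ P x) (hQ : ∀ x, 0 ≤ Q x)
    (hP1 : ∑ x, P x = 1) (hQ1 : ∑ x, Q x = 1) (hac : ∀ x, Q x = 0 → P x = 0) :
    0 ≤ renyiDiv α P Q :=
  mul_nonneg (inv_nonneg.2 (sub_nonneg.2 hα))
    (log_nonneg (one_le_sum_rpow_div hα hP hQ hP1 hQ1 hac))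

variable [DecidableEq X]

theorem condOn_nonneg (hP : ∀ x, 0 ≤ P x) (E : Finset X) (x : X) : 0 ≤ condOn P E x := by
  unfold condOn
  split_ifs
  exacts [div_nonneg (hP x) (sum_nonneg fun y _ => hP y), le_rfl]

theorem sum_condOn_rpow_div (hα : α ≠ 0) (hP : ∀ x, 0 ≤ P x) (hQ : ∀ x, 0 ≤ Q x)
    (E : Finset X) :
    ∑ x, condOn P E x ^ α / condOn Q E x ^ (α - 1) =
      (∑ x ∈ E, P x ^ α / Q x ^ (α - 1)) * ((∑ x ∈ E, Q x) ^ (α - 1) / (∑ x ∈ E, P x) ^ α) := by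
  rw [← sum_subset (subset_univ E) fun x _ hx => by simp [condOn, hx, zero_rpow hα], sum_mul]
  refine sum_congr rfl fun x hx => ?_
  rw [condOn, condOn, if_pos hx, if_pos hx, div_rpow (hP x) (sum_nonneg fun y _ => hP y),
    div_rpow (hQ x) (sum_nonneg fun y _ => hQ y), div_div_div_eq, div_mul_div_comm]
  ring

theorem sum_condOn_rpow_div_rpow_le (hα : 1 ≤ α) (hP : ∀ x, 0 ≤ P x) (hQ : ∀ x, 0 ≤ Q x)
    (hP1 : ∑ x, P x = 1) (hQ1 : ∑ x, Q x = 1) (hac : ∀ x, Q x = 0 → P x = 0)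
    (E : Finset X) (hp : 0 < ∑ x ∈ E, P x) :
    (∑ x, condOn P E x ^ α / condOn Q E x ^ (α - 1)) ^ ∑ x ∈ E, P x ≤
      ∑ x, P x ^ α / Q x ^ (α - 1) := by
  have hα0 : 0 < α := by linarith
  set p := ∑ x ∈ E, P x
  set r := ∑ x ∈ E, Q x
  set T := ∑ x, condOn P E x ^ α / condOn Q E x ^ (α - 1)
  have hpc : ∑ x ∈ Eᶜ, P x = 1 - p := by rw [← hP1, ← sum_add_sum_compl E P]; ring
  have hrc : ∑ x ∈ Eᶜ, Q x = 1 - r := by rw [← hQ1, ← sum_add_sum_compl E Q]; ring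
  have hp1 : p ≤ 1 := by linarith [hpc ▸ sum_nonneg fun x (_ : x ∈ Eᶜ) => hP x]
  have hr1 : r ≤ 1 := by linarith [hrc ▸ sum_nonneg fun x (_ : x ∈ Eᶜ) => hQ x]
  have hpr : 1 - r = 0 → 1 - p = 0 := fun h =>
    hpc ▸ sum_eq_zero_of_sum_eq_zero_of_absCont Eᶜ hQ hac (hrc.trans h)
  have hr : 0 < r := (sum_nonneg fun x _ => hQ x).lt_of_ne fun h =>
    hp.ne' (sum_eq_zero_of_sum_eq_zero_of_absCont E hQ hac h.symm)
  have hT : 0 ≤ T := sum_nonneg fun x _ =>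
    div_nonneg (rpow_nonneg (condOn_nonneg hP E x) _) (rpow_nonneg (condOn_nonneg hQ E x) _)
  have hSE : (p * T ^ α⁻¹) ^ α / r ^ (α - 1) = ∑ x ∈ E, P x ^ α / Q x ^ (α - 1) := by
    have hpα : p ^ α ≠ 0 := (rpow_pos_of_pos hp α).ne'
    have hrα : r ^ (α - 1) ≠ 0 := (rpow_pos_of_pos hr _).ne'
    have hT_eq : T = (∑ x ∈ E, P x ^ α / Q x ^ (α - 1)) * (r ^ (α - 1) / p ^ α) :=
      sum_condOn_rpow_div hα0.ne' hP hQ E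
    rw [mul_rpow hp.le (rpow_nonneg hT _), rpow_inv_rpow hT hα0.ne', hT_eq]
    field_simp
  have hSEc : (1 - p) ^ α / (1 - r) ^ (α - 1) ≤ ∑ x ∈ Eᶜ, P x ^ α / Q x ^ (α - 1) := by
    simpa [hpc, hrc] using rpow_sum_div_rpow_sum_le Eᶜ hα hP hQ fun x _ => hac x
  calc T ^ p ≤ (p * T ^ α⁻¹ + (1 - p)) ^ α :=
        rpow_le_mul_rpow_inv_add_one_sub_rpow hT hp.le hp1 hα0
    _ = (p * T ^ α⁻¹ + (1 - p)) ^ α / (r + (1 - r)) ^ (α - 1) := by simp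
    _ ≤ (p * T ^ α⁻¹) ^ α / r ^ (α - 1) + (1 - p) ^ α / (1 - r) ^ (α - 1) :=
        rpow_add_div_rpow_add_le hα (mul_nonneg hp.le (rpow_nonneg hT _)) (sub_nonneg.2 hp1)
          hr.le (sub_nonneg.2 hr1) (fun h => absurd h hr.ne') hpr
    _ ≤ ∑ x ∈ E, P x ^ α / Q x ^ (α - 1) + ∑ x ∈ Eᶜ, P x ^ α / Q x ^ (α - 1) :=
        add_le_add hSE.le hSEc
    _ = ∑ x, P x ^ α / Q x ^ (α - 1) := sum_add_sum_compl E _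

theorem renyiDiv_condOn_le (hα : 1 ≤ α) (hP : ∀ x, 0 ≤ P x) (hQ : ∀ x, 0 ≤ Q x)
    (hP1 : ∑ x, P x = 1) (hQ1 : ∑ x, Q x = 1) (hac : ∀ x, Q x = 0 → P x = 0)
    (E : Finset X) (hp : 0 < ∑ x ∈ E, P x) :
    renyiDiv α (condOn P E) (condOn Q E) ≤ renyiDiv α P Q / ∑ x ∈ E, P x := by
  have hT : 0 ≤ ∑ x, condOn P E x ^ α / condOn Q E x ^ (α - 1) := sum_nonneg fun x _ =>
    div_nonneg (rpow_nonneg (condOn_nonneg hP E x) _) (rpow_nonneg (condOn_nonneg hQ E x) _)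
  rw [renyiDiv, renyiDiv, mul_div_assoc]
  exact mul_le_mul_of_nonneg_left
    (log_le_log_div_of_rpow_le hT (one_le_sum_rpow_div hα hP hQ hP1 hQ1 hac) hp
      (sum_condOn_rpow_div_rpow_le hα hP hQ hP1 hQ1 hac E hp))
    (inv_nonneg.2 (sub_nonneg.2 hα))

theorem renyiDiv_condOn_le_of_le {ρ q : ℝ} (hα : 1 ≤ α) (hq : 0 < q) (hP : ∀ x, 0 ≤ P x)
    (hQ : ∀ x, 0 ≤ Q x) (hP1 : ∑ x, P x = 1) (hQ1 : ∑ x, Q x = 1)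
    (hac : ∀ x, Q x = 0 → P x = 0) (E : Finset X) (hqE : q ≤ ∑ x ∈ E, P x)
    (hD : renyiDiv α P Q ≤ ρ * α) :
    renyiDiv α (condOn P E) (condOn Q E) ≤ ρ / q * α := calc
  renyiDiv α (condOn P E) (condOn Q E) ≤ renyiDiv α P Q / ∑ x ∈ E, P x :=
      renyiDiv_condOn_le hα hP hQ hP1 hQ1 hac E (hq.trans_le hqE)
  _ ≤ renyiDiv α P Q / q :=
      div_le_div_of_nonneg_left (renyiDiv_nonneg hα hP hQ hP1 hQ1 hac) hq hqE
  _ ≤ ρ / q * α := by rw [div_mul_eq_mul_div]; exact div_le_div_of_nonneg_right hD hq.le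

end Distributions

/-- zCDP indistinguishability under conditioning: if `X ≈_ρ X'` and the event `E`
has probability at least `q > 0` under both, then `X|_E ≈_{ρ/q} X'|_E`. -/
theorem indist_cond {X : Type*} [Fintype X] [DecidableEq X]
    (ρ q : ℝ) (hq : 0 < q) (P Q : X → ℝ)
    (hP : ∀ x, 0 ≤ P x) (hQ : ∀ x, 0 ≤ Q x)
    (hP1 : ∑ x, P x = 1) (hQ1 : ∑ x, Q x = 1)
    (hac : ∀ x, Q x = 0 ↔ P x = 0)
    (hind : Indist ρ P Q)
    (E : Finset X) (hPE : q ≤ ∑ x ∈ E, P x) (hQE : q ≤ ∑ x ∈ E, Q x) :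
    Indist (ρ / q) (condOn P E) (condOn Q E) := by
  intro α hα
  obtain ⟨hPQ, hQP⟩ := hind α hα
  exact ⟨renyiDiv_condOn_le_of_le hα.le hq hP hQ hP1 hQ1 (fun x => (hac x).1) E hPE hPQ,
    renyiDiv_condOn_le_of_le hα.le hq hQ hP hQ1 hP1 (fun x => (hac x).2) E hQE hQP⟩
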